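/- Let L be a geometric lattice of finite length. Then two distinct atoms of L are projective if and only if they are perspective. Moreover, if A₁, …, A_s are the projectivity classes of atoms and aᵢ := ⋁Aᵢ, then L is isomorphic to the direct product [0,a₁] × ⋯ × [0,a_s] via x ↦ (x ∧ a₁, …, x ∧ a_s) with inverse (x₁, …, x_s) ↦ x₁ ∨ ⋯ ∨ x_s, and each interval [0,aᵢ] is congruence-simple (its only congruences are the identity relation and the universal relation). -/

import Mathlib

/-- A set `θ ⊆ K × K` is a lattice congruence if it is an equivalence relation
compatible with joins and meets. -/
def IsLatticeCon {K : Type*} [Lattice K] (θ : Set (K × K)) : Prop :=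
  Equivalence (fun a b : K => (a, b) ∈ θ) ∧
    ∀ a b c d : K, (a, b) ∈ θ → (c, d) ∈ θ →
      (a ⊔ c, b ⊔ d) ∈ θ ∧ (a ⊓ c, b ⊓ d) ∈ θ

/-- `[c,d]` is the upper transpose of `[a,b]`, i.e. `[a,b] ↗ [c,d]`. -/
def UpperTranspose {L : Type*} [Lattice L] (a b c d : L) : Prop :=
  a = b ⊓ c ∧ d = b ⊔ c

/-- Two (nontrivial) intervals are transposed. -/
def TranspInt {L : Type*} [Lattice L] (x y : L × L) : Prop :=
  x.1 < x.2 ∧ y.1 < y.2 ∧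
    (UpperTranspose x.1 x.2 y.1 y.2 ∨ UpperTranspose y.1 y.2 x.1 x.2)

/-- Projectivity: the equivalence generated by transposition of intervals. -/
def ProjInt {L : Type*} [Lattice L] : L × L → L × L → Prop :=
  Relation.EqvGen TranspInt

/-- Projectivity of atoms: the coverings `(⊥, p)` and `(⊥, q)` are projective. -/
def AtomProjRel {L : Type*} [Lattice L] [OrderBot L]
    (p q : {r : L // IsAtom r}) : Prop :=
  ProjInt ((⊥ : L), p.val) ((⊥ : L), q.val)

set_option linter.unusedSectionVars false

namespace GeomAux

variable {L : Type*} [Lattice L] [BoundedOrder L] [DecidableEq L]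

/-- Perspectivity of atoms via a common axis. -/
def Persp {L : Type*} [Lattice L] [BoundedOrder L] (p q : L) : Prop :=
  ∃ e, p ⊓ e = ⊥ ∧ q ⊓ e = ⊥ ∧ p ⊔ e = q ⊔ e

lemma persp_symm {p q : L} (h : Persp p q) : Persp q p := by
  obtain ⟨e, h1, h2, h3⟩ := h; exact ⟨e, h2, h1, h3.symm⟩

lemma wfGT (hFL : ∃ N : ℕ, ∀ c : LTSeries L, c.length ≤ N) :
    WellFounded ((· > ·) : L → L → Prop) := by
  obtain ⟨N, hN⟩ := hFL
  rw [RelEmbedding.wellFounded_iff_isEmpty]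
  constructor
  intro f
  have hmono : ∀ m n : ℕ, n < m → f n < f m := fun m n h => f.map_rel_iff.2 h
  have := hN (RelSeries.mk (N + 1) (fun i => f i)
    (fun i => hmono _ _ (by exact_mod_cast Fin.castSucc_lt_succ (i := i))))
  simp [RelSeries.mk] at this

lemma exists_finsetLUB (hFL : ∃ N : ℕ, ∀ c : LTSeries L, c.length ≤ N) (S : Set L) :
    ∃ F : Finset L, ↑F ⊆ S ∧ IsLUB S (F.sup id) := by
  set T : Set L := {x | ∃ F : Finset L, ↑F ⊆ S ∧ x = F.sup id} with hT
  have hne : T.Nonempty := ⟨⊥, ∅, by simp, by simp⟩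
  obtain ⟨m, ⟨F, hFS, rfl⟩, hmax⟩ := (wfGT hFL).has_min T hne
  refine ⟨F, hFS, ?_, ?_⟩
  · intro s hs
    have hmem : (insert s F).sup id ∈ T :=
      ⟨insert s F, by rw [Finset.coe_insert]; exact Set.insert_subset hs hFS, rfl⟩
    have hge : F.sup id ≤ (insert s F).sup id := Finset.sup_mono (Finset.subset_insert _ _)
    have heq : (insert s F).sup id = F.sup id := by
      rcases hge.lt_or_eq with h | h
      · exact absurd h (hmax _ hmem)
      · exact h.symm
    calc s = id s := rfl
      _ ≤ (insert s F).sup id := Finset.le_sup (Finset.mem_insert_self _ _)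
      _ = F.sup id := heq
  · intro u hu
    exact Finset.sup_le fun b hb => hu (hFS hb)

lemma atom_inf {p x : L} (hp : IsAtom p) (h : ¬ p ≤ x) : p ⊓ x = ⊥ := by
  rcases (hp.le_iff.1 inf_le_left) with h1 | h1
  · exact h1
  · exact absurd (h1 ▸ inf_le_right) h

lemma exists_minimal_subset (r : L) : ∀ F : Finset L, r ≤ F.sup id →
    ∃ G, G ⊆ F ∧ r ≤ G.sup id ∧ ∀ q ∈ G, ¬ r ≤ (G.erase q).sup id := by
  intro F
  induction F using Finset.strongInductionOn with
  | _ F ih =>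
    intro h
    by_cases hex : ∃ q ∈ F, r ≤ (F.erase q).sup id
    · obtain ⟨q, hq, hle⟩ := hex
      obtain ⟨G, hG, h1, h2⟩ := ih (F.erase q) (Finset.erase_ssubset hq) hle
      exact ⟨G, hG.trans (Finset.erase_subset _ _), h1, h2⟩
    · push_neg at hex; exact ⟨F, subset_rfl, h, hex⟩

variable (hsemi : ∀ a b c d : L, a ⋖ b → a = b ⊓ c → d = b ⊔ c → c ⋖ d)
include hsemi

lemma cov_sup_atom {p x : L} (hp : IsAtom p) (h : ¬ p ≤ x) : x ⋖ x ⊔ p :=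
  hsemi ⊥ p x (x ⊔ p) hp.bot_covBy (atom_inf hp h).symm (by rw [sup_comm])

lemma exch {p q x : L} (hp : IsAtom p) (hq : IsAtom q)
    (h : q ≤ x ⊔ p) (hqx : ¬ q ≤ x) : p ≤ x ⊔ q := by
  have hpx : ¬ p ≤ x := fun h' => hqx (by rwa [sup_eq_left.2 h'] at h)
  have hcov : x ⋖ x ⊔ p := cov_sup_atom hsemi hp hpx
  have h1 : x < x ⊔ q := left_lt_sup.2 hqx
  have h2 : x ⊔ q ≤ x ⊔ p := sup_le le_sup_left h
  rcases hcov.eq_or_eq le_sup_left h2 with h3 | h3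
  · exact absurd h3.symm h1.ne
  · exact h3 ▸ le_sup_right

/-- Lemma M: the head of a minimal dependence is perspective to each member,
with axis the sup of the rest. -/
lemma persp_of_headMin {r : L} {F : Finset L} (hr : IsAtom r) (hF : ∀ p ∈ F, IsAtom p)
    (hle : r ≤ F.sup id) (hmin : ∀ q ∈ F, ¬ r ≤ (F.erase q).sup id)
    {q : L} (hq : q ∈ F) :
    r ⊓ (F.erase q).sup id = ⊥ ∧ q ⊓ (F.erase q).sup id = ⊥ ∧
      r ⊔ (F.erase q).sup id = q ⊔ (F.erase q).sup id := by
  set e := (F.erase q).sup id with he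
  have hre : ¬ r ≤ e := hmin q hq
  have hsupF : F.sup id = q ⊔ e := by
    conv_lhs => rw [← Finset.insert_erase hq]
    rw [Finset.sup_insert]; rfl
  have hqe : ¬ q ≤ e := by
    intro h
    exact hmin q hq (by
      have h2 : F.sup id ≤ e := by rw [hsupF]; exact sup_le h le_rfl
      exact hle.trans h2)
  have hrq : r ≤ e ⊔ q := by rw [sup_comm]; exact hsupF ▸ hle
  have hqer : q ≤ e ⊔ r := exch hsemi (hF q hq) hr hrq hre
  refine ⟨atom_inf hr hre, atom_inf (hF q hq) hqe, le_antisymm ?_ ?_⟩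
  · exact sup_le (hsupF ▸ hle) le_sup_right
  · exact sup_le (by rwa [sup_comm] at hqer) le_sup_right


/-- A dependent finset of atoms. -/
def DepF (C : Finset L) : Prop := ∃ v ∈ C, v ≤ (C.erase v).sup id

/-- A circuit: a minimal dependent finset of atoms. -/
def Circuit (C : Finset L) : Prop :=
  (∀ p ∈ C, IsAtom p) ∧ DepF C ∧ ∀ D ⊂ C, ¬ DepF D

lemma circuit_of_headMin {r : L} {F : Finset L} (hr : IsAtom r) (hF : ∀ p ∈ F, IsAtom p)
    (hrF : r ∉ F) (hle : r ≤ F.sup id) (hmin : ∀ q ∈ F, ¬ r ≤ (F.erase q).sup id) :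
    Circuit (insert r F) := by
  have collapse : ∀ u ∈ F, ¬ u ≤ (F.erase u).sup id := by
    intro u hu hle2
    apply hmin u hu
    refine hle.trans ?_
    conv_lhs => rw [← Finset.insert_erase hu]
    rw [Finset.sup_insert]
    exact sup_le hle2 le_rfl
  refine ⟨?_, ⟨r, Finset.mem_insert_self _ _, by rw [Finset.erase_insert hrF]; exact hle⟩, ?_⟩
  · intro p hp
    rcases Finset.mem_insert.1 hp with h | h
    · exact h ▸ hr
    · exact hF p h
  · rintro D hD ⟨u, huD, hudep⟩
    by_cases hrD : r ∈ D
    · set G := D.erase r with hG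
      have hGF : G ⊆ F := by
        intro x hx
        have hxD := Finset.mem_of_mem_erase hx
        rcases Finset.mem_insert.1 (hD.1 hxD) with h | h
        · exact absurd h (Finset.ne_of_mem_erase hx)
        · exact h
      have hGne : G ≠ F := by
        intro h
        have : insert r F ⊆ D := by
          rw [← h, hG, Finset.insert_erase hrD]
        exact absurd (hD.2 this) (by simp)
      obtain ⟨w, hwF, hwG⟩ : ∃ w ∈ F, w ∉ G := by
        by_contra hc
        push_neg at hc
        exact hGne (Finset.Subset.antisymm hGF hc)
      have hGsub : G ⊆ F.erase w := fun x hx =>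
        Finset.mem_erase.2 ⟨fun h => hwG (h ▸ hx), hGF hx⟩
      by_cases hur : u = r
      · subst hur
        have : u ≤ G.sup id := by rwa [← hG] at hudep
        exact hmin w hwF (this.trans (Finset.sup_mono hGsub))
      · have huG : u ∈ G := Finset.mem_erase.2 ⟨hur, huD⟩
        have hDe : D.erase u = insert r (G.erase u) := by
          rw [hG, Finset.erase_right_comm]
          rw [Finset.insert_erase]
          exact Finset.mem_erase.2 ⟨fun h => hur h.symm, hrD⟩
        rw [hDe, Finset.sup_insert] at hudep
        by_cases huy : u ≤ (G.erase u).sup id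
        · have : (G.erase u) ⊆ F.erase u :=
            fun x hx => Finset.mem_erase.2 ⟨(Finset.mem_erase.1 hx).1,
              hGF (Finset.mem_of_mem_erase hx)⟩
          exact collapse u (hGF huG) (huy.trans (Finset.sup_mono this))
        · have hex : r ≤ (G.erase u).sup id ⊔ u := by
            refine exch hsemi hr (hF u (hGF huG)) ?_ huy
            rwa [sup_comm] at hudep
          have : (G.erase u).sup id ⊔ u = G.sup id := by
            conv_rhs => rw [← Finset.insert_erase huG]
            rw [Finset.sup_insert, sup_comm]
            rfl
          rw [this] at hex
          exact hmin w hwF (hex.trans (Finset.sup_mono hGsub))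
    · have hDF : D ⊆ F := by
        intro x hx
        rcases Finset.mem_insert.1 (hD.1 hx) with h | h
        · exact absurd (h ▸ hx) hrD
        · exact h
      have : D.erase u ⊆ F.erase u :=
        fun x hx => Finset.mem_erase.2 ⟨(Finset.mem_erase.1 hx).1, hDF (Finset.mem_of_mem_erase hx)⟩
      exact collapse u (hDF huD) (hudep.trans (Finset.sup_mono this))

lemma circuit_headMin {C : Finset L} (hC : Circuit C) {u : L} (hu : u ∈ C) :
    u ≤ (C.erase u).sup id ∧ ∀ q ∈ C.erase u, ¬ u ≤ ((C.erase u).erase q).sup id := by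
  constructor
  · obtain ⟨v, hv, hvle⟩ := hC.2.1
    by_cases huv : u = v
    · exact huv ▸ hvle
    · have hvCu : v ∈ C.erase u := Finset.mem_erase.2 ⟨fun h => huv h.symm, hv⟩
      have hvnot : ¬ v ≤ ((C.erase u).erase v).sup id := by
        intro h
        exact hC.2.2 (C.erase u) (Finset.erase_ssubset hu) ⟨v, hvCu, h⟩
      have huCv : u ∈ C.erase v := Finset.mem_erase.2 ⟨huv, hu⟩
      have hvle' : v ≤ u ⊔ ((C.erase v).erase u).sup id := by
        calc v ≤ (C.erase v).sup id := hvle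
          _ = u ⊔ ((C.erase v).erase u).sup id := by
            conv_lhs => rw [← Finset.insert_erase huCv]
            rw [Finset.sup_insert]; rfl
      rw [Finset.erase_right_comm] at hvle'
      have hex : u ≤ ((C.erase u).erase v).sup id ⊔ v := by
        refine exch hsemi (hC.1 u hu) (hC.1 v hv) ?_ hvnot
        rwa [sup_comm] at hvle'
      calc u ≤ ((C.erase u).erase v).sup id ⊔ v := hex
        _ = (C.erase u).sup id := by
          conv_rhs => rw [← Finset.insert_erase hvCu]
          rw [Finset.sup_insert, sup_comm]
          rfl
  · intro q hq hle
    have huq : u ∈ C.erase q :=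
      Finset.mem_erase.2 ⟨fun h => (Finset.mem_erase.1 hq).1 h.symm, hu⟩
    refine hC.2.2 (C.erase q) (Finset.erase_ssubset (Finset.mem_of_mem_erase hq)) ⟨u, huq, ?_⟩
    rwa [Finset.erase_right_comm] at hle

omit hsemi in
lemma circuit_eq_of_subset {C C' : Finset L} (hC : Circuit C) (hC' : Circuit C')
    (hsub : C' ⊆ C) : C' = C := by
  by_contra hne
  exact hC.2.2 C' (lt_of_le_of_ne hsub hne) hC'.2.1

/-- Any two distinct members of a circuit are perspective, with axis below the
sup of the circuit. -/
lemma circuit_persp {C : Finset L} (hC : Circuit C) {u v : L} (hu : u ∈ C) (hv : v ∈ C)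
    (huv : u ≠ v) :
    u ⊓ ((C.erase u).erase v).sup id = ⊥ ∧ v ⊓ ((C.erase u).erase v).sup id = ⊥ ∧
      u ⊔ ((C.erase u).erase v).sup id = v ⊔ ((C.erase u).erase v).sup id := by
  have h := circuit_headMin hsemi hC hu
  exact persp_of_headMin hsemi (hC.1 u hu)
    (fun p hp => hC.1 p (Finset.mem_of_mem_erase hp)) h.1 h.2
    (Finset.mem_erase.2 ⟨fun h' => huv h'.symm, hv⟩)

lemma exists_circuit_of_le {r : L} {F : Finset L} (hr : IsAtom r) (hF : ∀ p ∈ F, IsAtom p)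
    (hrF : r ∉ F) (hle : r ≤ F.sup id) :
    ∃ C, Circuit C ∧ r ∈ C ∧ C ⊆ insert r F := by
  obtain ⟨G, hGF, h1, h2⟩ := exists_minimal_subset r F hle
  exact ⟨insert r G, circuit_of_headMin hsemi hr (fun p hp => hF p (hGF hp))
    (fun h => hrF (hGF h)) h1 h2, Finset.mem_insert_self _ _,
    Finset.insert_subset_insert _ hGF⟩

lemma circuit_strong_elim {C₁ C₂ : Finset L} (h1 : Circuit C₁) (h2 : Circuit C₂)
    {e f : L} (hf1 : f ∈ C₁) (hf2 : f ∈ C₂) (he1 : e ∈ C₁) (he2 : e ∉ C₂) (hef : e ≠ f) :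
    ∃ C₃, Circuit C₃ ∧ e ∈ C₃ ∧ C₃ ⊆ (C₁ ∪ C₂).erase f := by
  set W := ((C₁ ∪ C₂).erase f).erase e with hW
  have hWatom : ∀ p ∈ W, IsAtom p := by
    intro p hp
    rcases Finset.mem_union.1 (Finset.mem_of_mem_erase (Finset.mem_of_mem_erase hp)) with h | h
    · exact h1.1 p h
    · exact h2.1 p h
  have hfW : f ≤ W.sup id := by
    refine (circuit_headMin hsemi h2 hf2).1.trans (Finset.sup_mono ?_)
    intro x hx
    obtain ⟨hxf, hxC2⟩ := Finset.mem_erase.1 hx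
    exact Finset.mem_erase.2 ⟨fun h => he2 (h ▸ hxC2), Finset.mem_erase.2
      ⟨hxf, Finset.mem_union_right _ hxC2⟩⟩
  have heW : e ≤ W.sup id := by
    have h3 : C₁.erase e ⊆ insert f W := by
      intro x hx
      obtain ⟨hxe, hxC1⟩ := Finset.mem_erase.1 hx
      by_cases hxf : x = f
      · exact hxf ▸ Finset.mem_insert_self _ _
      · exact Finset.mem_insert_of_mem (Finset.mem_erase.2 ⟨hxe, Finset.mem_erase.2
          ⟨hxf, Finset.mem_union_left _ hxC1⟩⟩)
    calc e ≤ (C₁.erase e).sup id := (circuit_headMin hsemi h1 he1).1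
      _ ≤ (insert f W).sup id := Finset.sup_mono h3
      _ = f ⊔ W.sup id := Finset.sup_insert
      _ = W.sup id := sup_eq_right.2 hfW
  have heWmem : e ∉ W := fun h => (Finset.mem_erase.1 h).1 rfl
  obtain ⟨C₃, hC₃, heC₃, hsub⟩ := exists_circuit_of_le hsemi
    (h1.1 e he1) hWatom heWmem heW
  refine ⟨C₃, hC₃, heC₃, hsub.trans ?_⟩
  intro x hx
  rcases Finset.mem_insert.1 hx with h | h
  · exact h ▸ Finset.mem_erase.2 ⟨hef, Finset.mem_union_left _ he1⟩
  · exact Finset.mem_of_mem_erase h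

lemma circuit_trans {p q t : L}
    (h1 : ∃ C, Circuit C ∧ p ∈ C ∧ q ∈ C) (h2 : ∃ C, Circuit C ∧ q ∈ C ∧ t ∈ C) :
    ∃ C, Circuit C ∧ p ∈ C ∧ t ∈ C := by
  set P : Set ℕ := {n | ∃ D₁ D₂, Circuit D₁ ∧ Circuit D₂ ∧ p ∈ D₁ ∧ t ∈ D₂ ∧
    (D₁ ∩ D₂).Nonempty ∧ n = (D₁ ∪ D₂).card} with hP
  obtain ⟨C₁, hC₁, hpC₁, hqC₁⟩ := h1
  obtain ⟨C₂, hC₂, hqC₂, htC₂⟩ := h2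
  have hPne : P.Nonempty :=
    ⟨(C₁ ∪ C₂).card, C₁, C₂, hC₁, hC₂, hpC₁, htC₂,
      ⟨q, Finset.mem_inter.2 ⟨hqC₁, hqC₂⟩⟩, rfl⟩
  obtain ⟨n₀, hn₀, hminP⟩ := (wellFounded_lt (α := ℕ)).has_min P hPne
  obtain ⟨D₁, D₂, hD₁, hD₂, hpD₁, htD₂, ⟨f, hfmem⟩, hcard⟩ := hn₀
  obtain ⟨hf1, hf2⟩ := Finset.mem_inter.1 hfmem
  by_cases htD₁ : t ∈ D₁
  · exact ⟨D₁, hD₁, hpD₁, htD₁⟩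
  by_cases hpD₂ : p ∈ D₂
  · exact ⟨D₂, hD₂, hpD₂, htD₂⟩
  have hpf : p ≠ f := fun h => hpD₂ (h ▸ hf2)
  have htf : t ≠ f := fun h => htD₁ (h ▸ hf1)
  obtain ⟨C₃, hC₃, hpC₃, hsub₃⟩ :=
    circuit_strong_elim hsemi hD₁ hD₂ hf1 hf2 hpD₁ hpD₂ hpf
  by_cases htC₃ : t ∈ C₃
  · exact ⟨C₃, hC₃, hpC₃, htC₃⟩
  have hfC₃ : f ∉ C₃ := fun h => (Finset.mem_erase.1 (hsub₃ h)).1 rfl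
  have hC₃nsub : ¬ C₃ ⊆ D₁ := by
    intro hsub
    exact hfC₃ ((circuit_eq_of_subset hD₁ hC₃ hsub) ▸ hf1)
  obtain ⟨h₀, hh₀C₃, hh₀D₁⟩ : ∃ x, x ∈ C₃ ∧ x ∉ D₁ := by
    by_contra hc
    push_neg at hc
    exact hC₃nsub (fun x hx => hc x hx)
  have hh₀D₂ : h₀ ∈ D₂ := by
    rcases Finset.mem_union.1 (Finset.mem_of_mem_erase (hsub₃ hh₀C₃)) with h | h
    · exact absurd h hh₀D₁
    · exact h
  -- symmetric side
  obtain ⟨C₄, hC₄, htC₄, hsub₄⟩ :=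
    circuit_strong_elim hsemi hD₂ hD₁ hf2 hf1 htD₂ htD₁ htf
  by_cases hpC₄ : p ∈ C₄
  · exact ⟨C₄, hC₄, hpC₄, htC₄⟩
  have hfC₄ : f ∉ C₄ := fun h => (Finset.mem_erase.1 (hsub₄ h)).1 rfl
  have hC₄nsub : ¬ C₄ ⊆ D₂ := by
    intro hsub
    exact hfC₄ ((circuit_eq_of_subset hD₂ hC₄ hsub) ▸ hf2)
  obtain ⟨h₁', hh₁C₄, hh₁D₂⟩ : ∃ x, x ∈ C₄ ∧ x ∉ D₂ := by
    by_contra hc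
    push_neg at hc
    exact hC₄nsub (fun x hx => hc x hx)
  have hh₁D₁ : h₁' ∈ D₁ := by
    rcases Finset.mem_union.1 (Finset.mem_of_mem_erase (hsub₄ hh₁C₄)) with h | h
    · exact absurd h hh₁D₂
    · exact h
  -- the pair (D₁, C₄) is in P, so by minimality D₁ ∪ C₄ = D₁ ∪ D₂
  have hpair4 : (D₁ ∪ C₄).card ∈ P :=
    ⟨D₁, C₄, hD₁, hC₄, hpD₁, htC₄, ⟨h₁', Finset.mem_inter.2 ⟨hh₁D₁, hh₁C₄⟩⟩, rfl⟩
  have hsub4 : D₁ ∪ C₄ ⊆ D₁ ∪ D₂ := by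
    refine Finset.union_subset Finset.subset_union_left ?_
    refine (hsub₄.trans ?_)
    intro x hx
    rw [Finset.union_comm]
    exact Finset.mem_of_mem_erase hx
  have hEq4 : D₁ ∪ C₄ = D₁ ∪ D₂ := by
    refine Finset.eq_of_subset_of_card_le hsub4 ?_
    have h5 := hminP _ hpair4
    rw [← hcard]
    omega
  have hh₀C₄ : h₀ ∈ C₄ := by
    have : h₀ ∈ D₁ ∪ C₄ := hEq4 ▸ Finset.mem_union_right _ hh₀D₂
    rcases Finset.mem_union.1 this with h | h
    · exact absurd h hh₀D₁
    · exact h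
  -- final pair (C₃, C₄) gives a strictly smaller union: contradiction
  have hpair34 : (C₃ ∪ C₄).card ∈ P :=
    ⟨C₃, C₄, hC₃, hC₄, hpC₃, htC₄, ⟨h₀, Finset.mem_inter.2 ⟨hh₀C₃, hh₀C₄⟩⟩, rfl⟩
  exfalso
  apply hminP _ hpair34
  have hsub34 : C₃ ∪ C₄ ⊆ (D₁ ∪ D₂).erase f := by
    refine Finset.union_subset hsub₃ ?_
    refine hsub₄.trans ?_
    rw [Finset.union_comm]
  have hcard34 : (C₃ ∪ C₄).card ≤ (D₁ ∪ D₂).card - 1 := by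
    have h6 := Finset.card_le_card hsub34
    rw [Finset.card_erase_of_mem (Finset.mem_union_left _ hf1)] at h6
    exact h6
  have hpos : 0 < (D₁ ∪ D₂).card :=
    Finset.card_pos.2 ⟨f, Finset.mem_union_left _ hf1⟩
  omega


/-- Connectivity relation on atoms: equal or in a common circuit. -/
def Rel (p q : L) : Prop := p = q ∨ ∃ C : Finset L, Circuit C ∧ p ∈ C ∧ q ∈ C

omit hsemi in
lemma rel_refl (p : L) : Rel p p := Or.inl rfl

omit hsemi in
lemma rel_symm {p q : L} (h : Rel p q) : Rel q p := by
  rcases h with h | ⟨C, hC, h1, h2⟩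
  · exact Or.inl h.symm
  · exact Or.inr ⟨C, hC, h2, h1⟩

lemma rel_trans {p q t : L} (h1 : Rel p q) (h2 : Rel q t) : Rel p t := by
  rcases h1 with rfl | hc1
  · exact h2
  rcases h2 with rfl | hc2
  · exact Or.inr hc1
  exact Or.inr (circuit_trans hsemi hc1 hc2)

lemma persp_of_rel_ne {p q : L} (h : Rel p q) (hne : p ≠ q) : Persp p q := by
  rcases h with h | ⟨C, hC, h1, h2⟩
  · exact absurd h hne
  obtain ⟨ha, hb, hc⟩ := circuit_persp hsemi hC h1 h2 hne
  exact ⟨_, ha, hb, hc⟩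

variable (hatom : ∀ x : L, ∃ S : Finset L, (∀ a ∈ S, IsAtom a) ∧ x = S.sup id)
include hatom

lemma rel_of_persp {p q : L} (hp : IsAtom p) (hq : IsAtom q) (hne : p ≠ q)
    (h : Persp p q) : Rel p q := by
  obtain ⟨e, hpe, hqe, hsup⟩ := h
  obtain ⟨E, hE, rfl⟩ := hatom e
  have hqle : q ≤ (insert p E).sup id := by
    rw [Finset.sup_insert]
    calc q ≤ q ⊔ E.sup id := le_sup_left
      _ = id p ⊔ E.sup id := hsup.symm
  have hqE : ¬ q ≤ E.sup id := by
    intro h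
    have : q ⊓ E.sup id = q := inf_eq_left.2 h
    rw [hqe] at this
    exact hq.1 this.symm
  have hqmem : q ∉ insert p E := by
    intro h
    rcases Finset.mem_insert.1 h with h | h
    · exact hne h.symm
    · exact hqE (Finset.le_sup (f := id) h)
  have hatoms : ∀ x ∈ insert p E, IsAtom x := by
    intro x hx
    rcases Finset.mem_insert.1 hx with h | h
    · exact h ▸ hp
    · exact hE x h
  obtain ⟨C, hC, hqC, hsub⟩ := exists_circuit_of_le hsemi hq hatoms hqmem hqle
  refine Or.inr ⟨C, hC, ?_, hqC⟩
  by_contra hpC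
  have hCE : C.erase q ⊆ E := by
    intro x hx
    obtain ⟨hxq, hxC⟩ := Finset.mem_erase.1 hx
    rcases Finset.mem_insert.1 (hsub hxC) with h | h
    · exact absurd h hxq
    · rcases Finset.mem_insert.1 h with h' | h'
      · exact absurd (h' ▸ hxC) hpC
      · exact h'
  exact hqE ((circuit_headMin hsemi hC hqC).1.trans (Finset.sup_mono hCE))

omit hsemi in
omit hatom in
lemma sup_empty_atom {r : L} (hr : IsAtom r) (h : r ≤ (∅ : Finset L).sup id) : False := by
  simp only [Finset.sup_empty] at h
  exact hr.1 (le_bot_iff.1 h)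

omit hatom in
lemma exists_rel_mem {r : L} {F : Finset L} (hr : IsAtom r) (hF : ∀ p ∈ F, IsAtom p)
    (hle : r ≤ F.sup id) : ∃ q ∈ F, Rel r q := by
  obtain ⟨G, hGF, h1, h2⟩ := exists_minimal_subset r F hle
  obtain ⟨q, hq⟩ : G.Nonempty := by
    rcases Finset.eq_empty_or_nonempty G with rfl | h
    · exact absurd h1 (fun h => sup_empty_atom hr h)
    · exact h
  by_cases hrG : r ∈ G
  · exact ⟨r, hGF hrG, rel_refl r⟩
  · have hcirc := circuit_of_headMin hsemi hr (fun p hp => hF p (hGF hp)) hrG h1 h2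
    exact ⟨q, hGF hq, Or.inr ⟨insert r G, hcirc, Finset.mem_insert_self _ _,
      Finset.mem_insert_of_mem hq⟩⟩

omit hatom in
/-- Splitting: an atom below a finite sup of atoms is below the sup of those
related to it. -/
lemma split_le_rel {r : L} {F : Finset L} (hr : IsAtom r) (hF : ∀ p ∈ F, IsAtom p)
    (hle : r ≤ F.sup id) : ∃ G, G ⊆ F ∧ (∀ s ∈ G, Rel r s) ∧ r ≤ G.sup id := by
  obtain ⟨G, hGF, h1, h2⟩ := exists_minimal_subset r F hle
  by_cases hrG : r ∈ G
  · refine ⟨{r}, Finset.singleton_subset_iff.2 (hGF hrG), ?_, by simp⟩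
    intro s hs
    rw [Finset.mem_singleton.1 hs]
    exact rel_refl r
  · have hcirc := circuit_of_headMin hsemi hr (fun p hp => hF p (hGF hp)) hrG h1 h2
    exact ⟨G, hGF, fun s hs => Or.inr ⟨insert r G, hcirc, Finset.mem_insert_self _ _,
      Finset.mem_insert_of_mem hs⟩, h1⟩


section Decomp

variable (hFL : ∃ N : ℕ, ∀ c : LTSeries L, c.length ≤ N)
variable {ι : Type*} (cls : ∀ p : L, IsAtom p → ι) (a : ι → L)
variable (hcls : ∀ p q (hp : IsAtom p) (hq : IsAtom q), cls p hp = cls q hq ↔ Rel p q)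
variable (ha : ∀ i, IsLUB {p : L | ∃ h : IsAtom p, cls p h = i} (a i))

omit hsemi hatom in
include ha in
lemma atom_le_a {p : L} (hp : IsAtom p) : p ≤ a (cls p hp) := (ha _).1 ⟨hp, rfl⟩

omit hatom in
include hFL hcls ha in
lemma cls_eq_of_le_a {p : L} (hp : IsAtom p) {i : ι} (h : p ≤ a i) : cls p hp = i := by
  obtain ⟨F, hFsub, hFlub⟩ := exists_finsetLUB hFL {p : L | ∃ h : IsAtom p, cls p h = i}
  have haeq : a i = F.sup id := (ha i).unique hFlub
  have hFat : ∀ x ∈ F, IsAtom x := fun x hx => (hFsub hx).1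
  obtain ⟨q, hqF, hrel⟩ := exists_rel_mem hsemi hp hFat (haeq ▸ h)
  obtain ⟨hq, hqi⟩ := hFsub hqF
  rw [← hqi]
  exact (hcls p q hp hq).2 hrel

omit hsemi in
include hFL hcls ha in
lemma isLUB_components (x : L) : IsLUB (Set.range fun i => x ⊓ a i) x := by
  constructor
  · rintro z ⟨i, rfl⟩
    exact inf_le_left
  · intro u hu
    obtain ⟨F, hFat, rfl⟩ := hatom x
    refine Finset.sup_le ?_
    intro s hs
    have h1 : s ≤ F.sup id := Finset.le_sup (f := id) hs
    have h2 : (s : L) ≤ F.sup id ⊓ a (cls s (hFat s hs)) :=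
      le_inf h1 (atom_le_a cls a ha (hFat s hs))
    exact h2.trans (hu ⟨cls s (hFat s hs), rfl⟩)

include hFL hcls ha in
lemma comp_lub (y : ∀ i, Set.Iic (a i)) {x : L}
    (hx : IsLUB (Set.range fun i => (y i : L)) x) (i : ι) : x ⊓ a i = (y i : L) := by
  refine le_antisymm ?_ (le_inf (hx.1 ⟨i, rfl⟩) (y i).2)
  -- every atom below x ⊓ a i is below y i
  obtain ⟨F, hFat, hFsup⟩ := hatom (x ⊓ a i)
  rw [hFsup]
  refine Finset.sup_le ?_
  intro r hr
  have hrx : (r : L) ≤ x := (Finset.le_sup (f := id) hr).trans (hFsup ▸ inf_le_left)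
  have hra : (r : L) ≤ a i := (Finset.le_sup (f := id) hr).trans (hFsup ▸ inf_le_right)
  have hcls_r : cls r (hFat r hr) = i :=
    cls_eq_of_le_a hsemi hFL cls a hcls ha (hFat r hr) hra
  -- x is a finite sup of the (y j)'s
  obtain ⟨F₂, hF₂sub, hF₂lub⟩ := exists_finsetLUB hFL (Set.range fun j => (y j : L))
  have hxeq : x = F₂.sup id := hx.unique hF₂lub
  -- replace the elements of F₂ by atoms tagged with their classes
  have hH : ∀ F' : Finset L, (↑F' ⊆ Set.range fun j => (y j : L)) →
      ∃ H : Finset L, F'.sup id ≤ H.sup id ∧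
        ∀ s ∈ H, ∃ (hs : IsAtom s) (j : ι), s ≤ (y j : L) ∧ cls s hs = j := by
    intro F'
    induction F' using Finset.induction_on with
    | empty => exact fun _ => ⟨∅, le_rfl, by simp⟩
    | insert _ _ hznotmem =>
      rename_i z F'' ih
      intro hsub
      obtain ⟨H', hH1, hH2⟩ := ih (fun w hw => hsub (Finset.mem_coe.2
        (Finset.mem_insert_of_mem (Finset.mem_coe.1 hw))))
      obtain ⟨j, hj'⟩ := hsub (Finset.mem_coe.2 (Finset.mem_insert_self _ _))
      have hj : (y j : L) = z := hj'
      obtain ⟨G, hGat, hGsup⟩ := hatom z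
      refine ⟨G ∪ H', ?_, ?_⟩
      · rw [Finset.sup_insert, Finset.sup_union]
        exact sup_le_sup (le_of_eq (hj ▸ hGsup)) hH1
      · intro s hs
        rcases Finset.mem_union.1 hs with h | h
        · refine ⟨hGat s h, j, ?_, ?_⟩
          · rw [hj, hGsup]
            exact Finset.le_sup (f := id) h
          · refine cls_eq_of_le_a hsemi hFL cls a hcls ha (hGat s h) ?_
            have h1 : s ≤ z := by rw [hGsup]; exact Finset.le_sup (f := id) h
            exact (h1.trans (hj ▸ (y j).2 : z ≤ a j))
        · exact hH2 s h
  obtain ⟨H, hHle, hHtag⟩ := hH F₂ hF₂sub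
  have hrH : (r : L) ≤ H.sup id := hrx.trans (hxeq ▸ hHle)
  have hHat : ∀ s ∈ H, IsAtom s := fun s hs => (hHtag s hs).choose
  obtain ⟨G, hGH, hGrel, hGle⟩ := split_le_rel hsemi (hFat r hr) hHat hrH
  refine hGle.trans (Finset.sup_le ?_)
  intro s hs
  obtain ⟨hsAtom, j, hsy, hsj⟩ := hHtag s (hGH hs)
  have : cls s hsAtom = cls r (hFat r hr) :=
    (hcls s r hsAtom (hFat r hr)).2 (rel_symm (hGrel s hs))
  rw [this, hcls_r] at hsj
  rwa [← hsj] at hsy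

include hFL hcls ha in
lemma exists_decomp_iso :
    ∃ iso : L ≃o (∀ i, Set.Iic (a i)), ∀ x i, ((iso x) i : L) = x ⊓ a i := by
  have hlub : ∀ y : (∀ i, Set.Iic (a i)), ∃ x, IsLUB (Set.range fun i => (y i : L)) x := by
    intro y
    obtain ⟨F, _, h⟩ := exists_finsetLUB hFL (Set.range fun i => (y i : L))
    exact ⟨_, h⟩
  choose ψ hψ using hlub
  refine ⟨⟨⟨fun x i => ⟨x ⊓ a i, inf_le_right⟩, ψ, ?_, ?_⟩, ?_⟩, fun x i => rfl⟩
  · intro x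
    exact ((hψ _).unique (isLUB_components hatom hFL cls a hcls ha x))
  · intro y
    funext i
    exact Subtype.ext (comp_lub hsemi hatom hFL cls a hcls ha y (hψ y) i)
  · intro x y
    constructor
    · intro h
      refine (isLUB_components hatom hFL cls a hcls ha x).2 ?_
      rintro z ⟨i, rfl⟩
      calc x ⊓ a i ≤ y ⊓ a i := h i
        _ ≤ y := inf_le_left
    · intro h i
      exact Subtype.mk_le_mk.2 (inf_le_inf_right _ h)

include hFL hcls ha in
lemma comp_sup (u v : L) (i : ι) : (u ⊔ v) ⊓ a i = (u ⊓ a i) ⊔ (v ⊓ a i) := by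
  obtain ⟨iso, hiso⟩ := exists_decomp_iso hsemi hatom hFL cls a hcls ha
  have h := congrArg (fun t => ((t i : L))) (iso.map_sup u v)
  have h2 : ((iso (u ⊔ v)) i : L) = ((iso u) i : L) ⊔ ((iso v) i : L) := h
  rw [hiso, hiso, hiso] at h2
  exact h2

include hFL hcls ha in
lemma inv_transp {x y : L × L} (h : TranspInt x y) :
    {i : ι | x.1 ⊓ a i = x.2 ⊓ a i} = {i : ι | y.1 ⊓ a i = y.2 ⊓ a i} := by
  obtain ⟨-, -, hut⟩ := h
  have key : ∀ x₁ x₂ y₁ y₂ : L, UpperTranspose x₁ x₂ y₁ y₂ →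
      ∀ i, (x₁ ⊓ a i = x₂ ⊓ a i ↔ y₁ ⊓ a i = y₂ ⊓ a i) := by
    rintro x₁ x₂ y₁ y₂ ⟨h1, h2⟩ i
    have e1 : x₁ ⊓ a i = (x₂ ⊓ a i) ⊓ (y₁ ⊓ a i) := by
      rw [h1]
      rw [inf_inf_distrib_right]
    have e2 : y₂ ⊓ a i = (x₂ ⊓ a i) ⊔ (y₁ ⊓ a i) := by
      rw [h2]
      exact comp_sup hsemi hatom hFL cls a hcls ha x₂ y₁ i
    rw [e1, e2]
    constructor
    · intro h
      have hle : (x₂ ⊓ a i) ≤ (y₁ ⊓ a i) := inf_eq_left.1 h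
      exact (sup_eq_right.2 hle).symm
    · intro h
      have hle : (x₂ ⊓ a i) ≤ (y₁ ⊓ a i) := sup_eq_right.1 h.symm
      exact inf_eq_left.2 hle
  rcases hut with h | h
  · ext i; exact key _ _ _ _ h i
  · ext i; exact (key _ _ _ _ h i).symm

include hFL hcls ha in
lemma inv_proj {x y : L × L} (h : ProjInt x y) :
    {i : ι | x.1 ⊓ a i = x.2 ⊓ a i} = {i : ι | y.1 ⊓ a i = y.2 ⊓ a i} := by
  induction h with
  | rel u v huv => exact inv_transp hsemi hatom hFL cls a hcls ha huv
  | refl u => rfl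
  | symm u v _ ih => exact ih.symm
  | trans u v w _ _ ih1 ih2 => exact ih1.trans ih2

include hFL hcls ha in
lemma cls_eq_of_proj {p q : L} (hp : IsAtom p) (hq : IsAtom q)
    (h : ProjInt ((⊥ : L), p) ((⊥ : L), q)) : cls p hp = cls q hq := by
  have hinv := inv_proj hsemi hatom hFL cls a hcls ha h
  simp only [bot_inf_eq] at hinv
  have hqmem : cls q hq ∉ {i : ι | (⊥ : L) = q ⊓ a i} := by
    intro hmem
    simp only [Set.mem_setOf_eq] at hmem
    have : q ⊓ a (cls q hq) = q := inf_eq_left.2 (atom_le_a cls a ha hq)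
    rw [this] at hmem
    exact hq.1 hmem.symm
  rw [← hinv] at hqmem
  simp only [Set.mem_setOf_eq] at hqmem
  have hple : p ≤ a (cls q hq) := by
    rcases hp.le_iff.1 (inf_le_left : p ⊓ a (cls q hq) ≤ p) with h1 | h1
    · exact absurd h1.symm hqmem
    · exact inf_eq_left.1 h1
  exact cls_eq_of_le_a hsemi hFL cls a hcls ha hp hple

include hFL hcls ha in
lemma factor_simple (i : ι) (θ : Set ((Set.Iic (a i)) × (Set.Iic (a i))))
    (hθ : IsLatticeCon θ) : θ = {pq | pq.1 = pq.2} ∨ θ = Set.univ := by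
  obtain ⟨eqv, comp⟩ := hθ
  by_cases hdiag : ∀ pq ∈ θ, (pq : (Set.Iic (a i)) × (Set.Iic (a i))).1 = pq.2
  · left
    ext ⟨u, v⟩
    simp only [Set.mem_setOf_eq]
    exact ⟨fun h => hdiag _ h, fun h => h ▸ eqv.refl u⟩
  right
  push_neg at hdiag
  obtain ⟨⟨x, y⟩, hxyθ, hxyne⟩ := hdiag
  simp only at hxyne
  have h1 : (x ⊓ y, y) ∈ θ := by
    have := (comp x y y y hxyθ (eqv.refl y)).2
    rwa [inf_idem] at this
  have h2 : (x ⊔ y, y) ∈ θ := by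
    have := (comp x y y y hxyθ (eqv.refl y)).1
    rwa [sup_idem] at this
  have huv : (x ⊓ y, x ⊔ y) ∈ θ := eqv.trans h1 (eqv.symm h2)
  have hlt : x ⊓ y < x ⊔ y := by
    refine lt_of_le_of_ne inf_le_sup ?_
    intro h
    refine hxyne (le_antisymm ?_ ?_)
    · exact le_trans (le_trans le_sup_left h.symm.le) inf_le_right
    · exact le_trans (le_trans le_sup_right h.symm.le) inf_le_left
  set u := x ⊓ y with hu
  set v := x ⊔ y with hv
  obtain ⟨F, hFat, hFsup⟩ := hatom (v : L)
  obtain ⟨r, hrF, hru⟩ : ∃ r ∈ F, ¬ r ≤ (u : L) := by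
    by_contra hc
    push_neg at hc
    have : (v : L) ≤ (u : L) := by
      rw [hFsup]; exact Finset.sup_le hc
    exact hlt.not_ge this
  have hr : IsAtom r := hFat r hrF
  have hrv : r ≤ (v : L) := by rw [hFsup]; exact Finset.le_sup (f := id) hrF
  have hrb : r ≤ a i := hrv.trans v.2
  have hbot : ((⊥ : L)) ≤ a i := bot_le
  have hrθ : ((⟨⊥, hbot⟩ : Set.Iic (a i)), (⟨r, hrb⟩ : Set.Iic (a i))) ∈ θ := by
    have hm := (comp u v ⟨r, hrb⟩ ⟨r, hrb⟩ huv (eqv.refl _)).2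
    have e1 : (u ⊓ (⟨r, hrb⟩ : Set.Iic (a i))) = ⟨⊥, hbot⟩ := by
      apply Subtype.ext
      show (u : L) ⊓ r = ⊥
      rw [inf_comm]
      exact atom_inf hr hru
    have e2 : (v ⊓ (⟨r, hrb⟩ : Set.Iic (a i))) = ⟨r, hrb⟩ := by
      apply Subtype.ext
      show (v : L) ⊓ r = r
      exact inf_eq_right.2 hrv
    rwa [e1, e2] at hm
  have hclsr : cls r hr = i := cls_eq_of_le_a hsemi hFL cls a hcls ha hr hrb
  have hall : ∀ s (hs : IsAtom s) (hsb : s ≤ a i),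
      ((⟨⊥, hbot⟩ : Set.Iic (a i)), (⟨s, hsb⟩ : Set.Iic (a i))) ∈ θ := by
    intro s hs hsb
    by_cases hsr : s = r
    · subst hsr; exact hrθ
    have hclss : cls s hs = i := cls_eq_of_le_a hsemi hFL cls a hcls ha hs hsb
    have hrel : Rel r s := (hcls r s hr hs).1 (hclsr.trans hclss.symm)
    rcases hrel with heq | ⟨C, hC, hrC, hsC⟩
    · exact absurd heq.symm hsr
    have hCb : ∀ w ∈ C, w ≤ a i := by
      intro w hw
      have hwat : IsAtom w := hC.1 w hw
      by_cases hwr : w = r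
      · exact hwr ▸ hrb
      have hrw : Rel r w := Or.inr ⟨C, hC, hrC, hw⟩
      have : cls r hr = cls w hwat := (hcls r w hr hwat).2 hrw
      have hwi : cls w hwat = i := this ▸ hclsr
      exact hwi ▸ atom_le_a cls a ha hwat
    set e := ((C.erase r).erase s).sup id with he
    have heb : e ≤ a i := Finset.sup_le fun w hw =>
      hCb w (Finset.mem_of_mem_erase (Finset.mem_of_mem_erase hw))
    obtain ⟨hre, hse, hsup⟩ := circuit_persp hsemi hC hrC hsC (fun h => hsr h.symm)
    have hj := (comp ⟨⊥, hbot⟩ ⟨r, hrb⟩ ⟨e, heb⟩ ⟨e, heb⟩ hrθ (eqv.refl _)).1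
    have e1 : ((⟨⊥, hbot⟩ : Set.Iic (a i)) ⊔ ⟨e, heb⟩) = ⟨e, heb⟩ := by
      apply Subtype.ext
      show (⊥ : L) ⊔ e = e
      rw [bot_sup_eq]
    rw [e1] at hj
    have hk := (comp _ _ (⟨s, hsb⟩ : Set.Iic (a i)) ⟨s, hsb⟩ hj (eqv.refl _)).2
    have e2 : ((⟨e, heb⟩ : Set.Iic (a i)) ⊓ ⟨s, hsb⟩) = ⟨⊥, hbot⟩ := by
      apply Subtype.ext
      show e ⊓ s = ⊥
      rw [inf_comm]
      exact hse
    have e3 : (((⟨r, hrb⟩ : Set.Iic (a i)) ⊔ ⟨e, heb⟩) ⊓ ⟨s, hsb⟩) = ⟨s, hsb⟩ := by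
      apply Subtype.ext
      show (r ⊔ e) ⊓ s = s
      rw [hsup]
      exact inf_eq_right.2 le_sup_left
    rw [e2, e3] at hk
    exact hk
  have hallx : ∀ z : Set.Iic (a i), ((⟨⊥, hbot⟩ : Set.Iic (a i)), z) ∈ θ := by
    intro z
    obtain ⟨F', hF'at, hF'sup⟩ := hatom (z : L)
    have main : ∀ (F'' : Finset L), (∀ p ∈ F'', IsAtom p) → ∀ (hle : F''.sup id ≤ a i),
        ((⟨⊥, hbot⟩ : Set.Iic (a i)), (⟨F''.sup id, hle⟩ : Set.Iic (a i))) ∈ θ := by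
      intro F''
      induction F'' using Finset.induction_on with
      | empty =>
        intro _ hle
        have : (⟨(∅ : Finset L).sup id, hle⟩ : Set.Iic (a i)) = ⟨⊥, hbot⟩ :=
          Subtype.ext (by simp)
        rw [this]
        exact eqv.refl _
      | insert _ _ hmem =>
        rename_i z' F₀ ih
        intro hat hle
        have hz'le : z' ≤ a i :=
          (Finset.le_sup (f := id) (Finset.mem_insert_self _ _)).trans hle
        have hF₀le : F₀.sup id ≤ a i :=
          (Finset.sup_mono (Finset.subset_insert _ _)).trans hle
        have h1 := hall z' (hat _ (Finset.mem_insert_self _ _)) hz'le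
        have h2 := ih (fun p hp => hat p (Finset.mem_insert_of_mem hp)) hF₀le
        have hm := (comp _ _ _ _ h1 h2).1
        have e1 : ((⟨⊥, hbot⟩ : Set.Iic (a i)) ⊔ ⟨⊥, hbot⟩) = ⟨⊥, hbot⟩ :=
          Subtype.ext (by simp)
        have e2 : ((⟨z', hz'le⟩ : Set.Iic (a i)) ⊔ ⟨F₀.sup id, hF₀le⟩) =
            ⟨(insert z' F₀).sup id, hle⟩ := by
          apply Subtype.ext
          show z' ⊔ F₀.sup id = (insert z' F₀).sup id
          rw [Finset.sup_insert]; rfl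
        rw [e1, e2] at hm
        exact hm
    have hFle : F'.sup id ≤ a i := by rw [← hF'sup]; exact z.2
    have := main F' hF'at hFle
    have heq : (⟨F'.sup id, hFle⟩ : Set.Iic (a i)) = z := Subtype.ext hF'sup.symm
    rwa [heq] at this
  ext ⟨w₁, w₂⟩
  simp only [Set.mem_univ, iff_true]
  have hw1 := hallx w₁
  have hw2 := hallx w₂
  have j1 : (w₂, w₁ ⊔ w₂) ∈ θ := by
    have hm := (comp _ _ w₂ w₂ hw1 (eqv.refl _)).1
    have e1 : ((⟨⊥, hbot⟩ : Set.Iic (a i)) ⊔ w₂) = w₂ := by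
      apply Subtype.ext
      show (⊥ : L) ⊔ (w₂ : L) = (w₂ : L)
      simp
    rwa [e1] at hm
  have j2 : (w₁, w₁ ⊔ w₂) ∈ θ := by
    have hm := (comp w₁ w₁ _ _ (eqv.refl _) hw2).1
    have e1 : (w₁ ⊔ (⟨⊥, hbot⟩ : Set.Iic (a i))) = w₁ := by
      apply Subtype.ext
      show (w₁ : L) ⊔ (⊥ : L) = (w₁ : L)
      simp
    rwa [e1] at hm
  exact eqv.trans j2 (eqv.symm j1)

end Decomp

omit hsemi hatom in
/-- Perspective implies projective (two transposition steps via the common axis). -/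
lemma proj_of_persp {p q : L} (hp : IsAtom p) (hq : IsAtom q)
    (h : Persp p q) : ProjInt ((⊥ : L), p) ((⊥ : L), q) := by
  obtain ⟨e, hpe, hqe, hsup⟩ := h
  have hple : ¬ p ≤ e := fun hle => hp.1 (by rwa [inf_eq_left.2 hle] at hpe)
  have hqle : ¬ q ≤ e := fun hle => hq.1 (by rwa [inf_eq_left.2 hle] at hqe)
  have hef : e < p ⊔ e := by
    rcases lt_or_eq_of_le (le_sup_right : e ≤ p ⊔ e) with h | h
    · exact h
    · exact absurd (h ▸ le_sup_left) hple
  have t1 : TranspInt ((⊥ : L), p) (e, p ⊔ e) :=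
    ⟨hp.bot_covBy.lt, hef, Or.inl ⟨hpe.symm, rfl⟩⟩
  have t2 : TranspInt ((⊥ : L), q) (e, p ⊔ e) :=
    ⟨hq.bot_covBy.lt, hef, Or.inl ⟨hqe.symm, hsup⟩⟩
  exact Relation.EqvGen.trans _ _ _ (Relation.EqvGen.rel _ _ t1)
    (Relation.EqvGen.symm _ _ (Relation.EqvGen.rel _ _ t2))

end GeomAux

namespace GeomAux

lemma part1 {L : Type*} [Lattice L] [BoundedOrder L] [DecidableEq L]
    (hFL : ∃ N : ℕ, ∀ c : LTSeries L, c.length ≤ N)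
    (hsemi : ∀ a b c d : L, a ⋖ b → a = b ⊓ c → d = b ⊔ c → c ⋖ d)
    (hatom : ∀ x : L, ∃ S : Finset L, (∀ a ∈ S, IsAtom a) ∧ x = S.sup id)
    {p q : L} (hp : IsAtom p) (hq : IsAtom q) (hne : p ≠ q) :
    ProjInt ((⊥ : L), p) ((⊥ : L), q) ↔ Persp p q := by
  constructor
  · intro h
    let s : Setoid {r : L // IsAtom r} :=
      ⟨fun p q => Rel (p : L) (q : L),
        ⟨fun _ => rel_refl _, rel_symm, rel_trans hsemi⟩⟩
    let cls : ∀ p : L, IsAtom p → Quotient s := fun p hp => Quotient.mk s ⟨p, hp⟩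
    choose Fa hFa using fun i => exists_finsetLUB hFL {p : L | ∃ h : IsAtom p, cls p h = i}
    let a : Quotient s → L := fun i => (Fa i).sup id
    have ha : ∀ i, IsLUB {p : L | ∃ h : IsAtom p, cls p h = i} (a i) := fun i => (hFa i).2
    have hcls : ∀ p q (hp : IsAtom p) (hq : IsAtom q), cls p hp = cls q hq ↔ Rel p q := by
      intro p q hp hq
      constructor
      · intro he
        exact Quotient.eq (r := s).1 he
      · intro hrel
        exact Quotient.sound hrel
    have hcc := cls_eq_of_proj hsemi hatom hFL cls a hcls ha hp hq h
    exact persp_of_rel_ne hsemi ((hcls p q hp hq).1 hcc) hne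
  · exact proj_of_persp hp hq

end GeomAux

open GeomAux in
theorem geometric_projective_iff_perspective_and_decomposition'
    {L : Type*} [Lattice L] [BoundedOrder L]
    (hFL : ∃ N : ℕ, ∀ c : LTSeries L, c.length ≤ N)
    (hsemi : ∀ a b c d : L, a ⋖ b → a = b ⊓ c → d = b ⊔ c → c ⋖ d)
    (hatom : ∀ x : L, ∃ S : Finset L, (∀ a ∈ S, IsAtom a) ∧ x = S.sup id) :
    (∀ p q : L, IsAtom p → IsAtom q → p ≠ q →
      (ProjInt ((⊥ : L), p) ((⊥ : L), q) ↔
        ∃ e f : L, p ⊓ e = ⊥ ∧ p ⊔ e = f ∧ q ⊓ e = ⊥ ∧ q ⊔ e = f)) ∧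
    (∀ a : Quot (AtomProjRel (L := L)) → L,
      (∀ c, IsLUB {p : L | ∃ h : IsAtom p,
          Quot.mk (AtomProjRel (L := L)) ⟨p, h⟩ = c} (a c)) →
      ∃ iso : L ≃o (∀ c, Set.Iic (a c)),
        (∀ x : L, IsLUB (Set.range fun c => ((iso x) c : L)) x) ∧
        (∀ c, ∀ θ : Set ((Set.Iic (a c)) × (Set.Iic (a c))), IsLatticeCon θ →
          θ = {pq | pq.1 = pq.2} ∨ θ = Set.univ)) := by
  classical
  have hpart1 : ∀ p q : L, IsAtom p → IsAtom q → p ≠ q →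
      (ProjInt ((⊥ : L), p) ((⊥ : L), q) ↔
        ∃ e f : L, p ⊓ e = ⊥ ∧ p ⊔ e = f ∧ q ⊓ e = ⊥ ∧ q ⊔ e = f) := by
    intro p q hp hq hne
    rw [part1 hFL hsemi hatom hp hq hne]
    constructor
    · rintro ⟨e, h1, h2, h3⟩
      exact ⟨e, p ⊔ e, h1, rfl, h2, h3.symm⟩
    · rintro ⟨e, f, h1, h2, h3, h4⟩
      exact ⟨e, h1, h3, h2.trans h4.symm⟩
  refine ⟨hpart1, ?_⟩
  intro a ha
  set cls : ∀ p : L, IsAtom p → Quot (AtomProjRel (L := L)) :=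
    fun p h => Quot.mk (AtomProjRel (L := L)) ⟨p, h⟩ with hclsdef
  have hcls : ∀ p q (hp : IsAtom p) (hq : IsAtom q),
      cls p hp = cls q hq ↔ Rel p q := by
    intro p q hp hq
    constructor
    · intro he
      have key : ∀ x y : {r : L // IsAtom r}, Relation.EqvGen (AtomProjRel (L := L)) x y →
          Rel (x : L) (y : L) := by
        intro x y hgen
        induction hgen with
        | rel x y hxy =>
          by_cases hxyv : (x : L) = (y : L)
          · exact Or.inl hxyv
          · exact rel_of_persp hsemi hatom x.2 y.2 hxyv
              ((part1 hFL hsemi hatom x.2 y.2 hxyv).1 hxy)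
        | refl x => exact rel_refl _
        | symm x y _ ih => exact rel_symm ih
        | trans x y z _ _ ih1 ih2 => exact rel_trans hsemi ih1 ih2
      exact key _ _ (Quot.eqvGen_exact he)
    · intro hrel
      by_cases hpq : p = q
      · subst hpq; rfl
      · refine Quot.sound ?_
        show ProjInt ((⊥ : L), p) ((⊥ : L), q)
        exact proj_of_persp hp hq (persp_of_rel_ne hsemi hrel hpq)
  have ha' : ∀ i, IsLUB {p : L | ∃ h : IsAtom p, cls p h = i} (a i) := ha
  obtain ⟨iso, hiso⟩ := exists_decomp_iso hsemi hatom hFL cls a hcls ha'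
  refine ⟨iso, ?_, ?_⟩
  · intro x
    have h := isLUB_components hatom hFL cls a hcls ha' x
    have heq : (fun c => ((iso x) c : L)) = fun c => x ⊓ a c := funext fun c => hiso x c
    rw [heq]
    exact h
  · intro c θ hθ
    exact factor_simple hsemi hatom hFL cls a hcls ha' c θ hθ

/-- Let `L` be a geometric (semimodular and atomistic) lattice of finite length.
Then (1) two distinct atoms are projective iff they are perspective, and
(2) if `A₁, …, A_s` are the projectivity classes of atoms and `aᵢ := ⋁Aᵢ`, then
`L ≅ [0,a₁] × ⋯ × [0,a_s]` with inverse `(x₁, …, x_s) ↦ x₁ ∨ ⋯ ∨ x_s`, and each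
interval `[0,aᵢ]` is congruence-simple. -/
theorem geometric_projective_iff_perspective_and_decomposition
    {L : Type*} [Lattice L] [BoundedOrder L]
    (hFL : ∃ N : ℕ, ∀ c : LTSeries L, c.length ≤ N)
    (hsemi : ∀ a b c d : L, a ⋖ b → a = b ⊓ c → d = b ⊔ c → c ⋖ d)
    (hatom : ∀ x : L, ∃ S : Finset L, (∀ a ∈ S, IsAtom a) ∧ x = S.sup id) :
    (∀ p q : L, IsAtom p → IsAtom q → p ≠ q →
      (ProjInt ((⊥ : L), p) ((⊥ : L), q) ↔
        ∃ e f : L, p ⊓ e = ⊥ ∧ p ⊔ e = f ∧ q ⊓ e = ⊥ ∧ q ⊔ e = f)) ∧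
    (∀ a : Quot (AtomProjRel (L := L)) → L,
      (∀ c, IsLUB {p : L | ∃ h : IsAtom p,
          Quot.mk (AtomProjRel (L := L)) ⟨p, h⟩ = c} (a c)) →
      ∃ iso : L ≃o (∀ c, Set.Iic (a c)),
        (∀ x : L, IsLUB (Set.range fun c => ((iso x) c : L)) x) ∧
        (∀ c, ∀ θ : Set ((Set.Iic (a c)) × (Set.Iic (a c))), IsLatticeCon θ →
          θ = {pq | pq.1 = pq.2} ∨ θ = Set.univ)) := by
  exact geometric_projective_iff_perspective_and_decomposition' hFL hsemi hatom
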